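/- Let g be a real Lie algebra with an invariant inner product Q, a ⊆ g an abelian Lie subalgebra with orthogonal complement n = a^⊥, write X = X_a + X_n, and let 0 < t ≤ 4/3. Define the quadrilinear form T_t on g by T_t(X,Y,Z,W) = (1/4)Q([X_n + tX_a, Y_n + tY_a], [Z_n + tZ_a, W_n + tW_a]) + (3(1−t)/4)·Q([X_n,Y_n]_a, [Z_n,W_n]_a). Then T_t has curvature symmetries and is positive semidefinite on ∧²g: for every finite family of pairs (X_i,Y_i)_{i∈I} of elements of g, Σ_{i,j∈I} T_t(X_i,Y_i,X_j,Y_j) ≥ 0. (T_t equals R_t + ω_t, where R_t is the curvature operator of the left-invariant metric Q_t = t·Q|_a ⊕ Q|_n on the Lie group G and ω_t = 3b(α) is a 4-form; hence (G, Q_t) has strongly nonnegative curvature for all 0 < t ≤ 4/3.) -/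

import Mathlib

/-- A quadrilinear form: linear in each of the four arguments. -/
def IsQuadrilinear {V : Type*} [AddCommGroup V] [Module ℝ V]
    (T : V → V → V → V → ℝ) : Prop :=
  (∀ x x' y z w, T (x + x') y z w = T x y z w + T x' y z w) ∧
  (∀ (c : ℝ) x y z w, T (c • x) y z w = c * T x y z w) ∧
  (∀ x y y' z w, T x (y + y') z w = T x y z w + T x y' z w) ∧
  (∀ (c : ℝ) x y z w, T x (c • y) z w = c * T x y z w) ∧
  (∀ x y z z' w, T x y (z + z') w = T x y z w + T x y z' w) ∧
  (∀ (c : ℝ) x y z w, T x y (c • z) w = c * T x y z w) ∧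
  (∀ x y z w w', T x y z (w + w') = T x y z w + T x y z w') ∧
  (∀ (c : ℝ) x y z w, T x y z (c • w) = c * T x y z w)

/-- Curvature symmetries: antisymmetry in the first pair and symmetry under
exchange of the two pairs (such forms correspond to symmetric operators on `∧²V`). -/
def HasCurvatureSymmetries {V : Type*} (T : V → V → V → V → ℝ) : Prop :=
  (∀ x y z w, T x y z w = - T y x z w) ∧ (∀ x y z w, T x y z w = T z w x y)

/-- An alternating quadrilinear form (a 4-form): it vanishes whenever two arguments coincide. -/
def IsAlternating4 {V : Type*} (ω : V → V → V → V → ℝ) : Prop :=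
  ∀ x₁ x₂ x₃ x₄, (x₁ = x₂ ∨ x₁ = x₃ ∨ x₁ = x₄ ∨ x₂ = x₃ ∨ x₂ = x₄ ∨ x₃ = x₄) →
    ω x₁ x₂ x₃ x₄ = 0

/-- The Bianchi map. -/
noncomputable def bianchi {V : Type*} (T : V → V → V → V → ℝ) : V → V → V → V → ℝ :=
  fun x y z w => (1/3) * (T x y z w + T y z x w + T z x y w)

/-- Positive semidefiniteness on `∧²V` of a quadrilinear form with curvature symmetries. -/
def PosSemidefWedge {V : Type*} (T : V → V → V → V → ℝ) : Prop :=
  ∀ (m : ℕ) (X Y : Fin m → V), 0 ≤ ∑ i, ∑ j, T (X i) (Y i) (X j) (Y j)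

open RealInnerProductSpace

/-- The component `X_a` of `X` in the orthogonal decomposition `X = X_a + X_n`
determined by the subspace `a` (so that `X_n = X - X_a`). -/
noncomputable def compA {g : Type*} [NormedAddCommGroup g] [InnerProductSpace ℝ g]
    [FiniteDimensional ℝ g] (a : Submodule ℝ g) (X : g) : g :=
  (a.orthogonalProjectionOnto X : g)

attribute [local instance 2000] NormedAddCommGroup.toAddCommGroup

/-!
Write `F_t(X, Y) = [X_n + t X_a, Y_n + t Y_a]` and `P` for the orthogonal projection onto `a`.
Since `a` is abelian and invariance makes `[a, g] ⟂ a`, only `[X_n, Y_n]` contributes to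
`P F_t(X, Y)`, so `T_t(X,Y,Z,W) = B_t(F_t(X,Y), F_t(Z,W))` with
`B_t(u, v) = ¼⟪u, v⟫ + ¾(1 - t)⟪P u, P v⟫`. Both claims then hold for any such pullback
of a symmetric positive semidefinite form along a skew map, and
`B_t(u, u) ≥ (4 - 3t)/4 ‖P u‖² ≥ 0` because `‖P u‖ ≤ ‖u‖`.
-/

set_option linter.overlappingInstances false

section InvariantBracket

/- `g` carries two unrelated additive structures, the `LieRing` one and the normed one, and the
statement's `+`, `•` and `0` are the normed ones; bilinearity of the bracket for these is
recovered from invariance, since the inner product is nondegenerate. -/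

variable {g : Type*} [LieRing g] [NormedAddCommGroup g] [InnerProductSpace ℝ g]
  (hinv : ∀ X Y Z : g, ⟪⁅X, Y⁆, Z⟫ = ⟪X, ⁅Y, Z⁆⟫)
include hinv

theorem inner_lie_cycle_of_invariant (X Y Z : g) : ⟪⁅X, Y⁆, Z⟫ = ⟪⁅Y, Z⁆, X⟫ := by
  rw [hinv, real_inner_comm]

theorem add_lie_of_invariant (X X' Y : g) : ⁅X + X', Y⁆ = ⁅X, Y⁆ + ⁅X', Y⁆ :=
  ext_inner_right ℝ fun Z => by rw [hinv, inner_add_left, inner_add_left, hinv, hinv]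

theorem lie_add_of_invariant (X Y Y' : g) : ⁅X, Y + Y'⁆ = ⁅X, Y⁆ + ⁅X, Y'⁆ :=
  ext_inner_right ℝ fun Z => by
    simp only [inner_lie_cycle_of_invariant hinv X, add_lie_of_invariant hinv, inner_add_left]

theorem smul_lie_of_invariant (c : ℝ) (X Y : g) : ⁅c • X, Y⁆ = c • ⁅X, Y⁆ :=
  ext_inner_right ℝ fun Z => by
    rw [hinv, real_inner_smul_left, real_inner_smul_left, hinv]

theorem lie_smul_of_invariant (c : ℝ) (X Y : g) : ⁅X, c • Y⁆ = c • ⁅X, Y⁆ :=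
  ext_inner_right ℝ fun Z => by
    rw [hinv, smul_lie_of_invariant hinv, real_inner_smul_right, real_inner_smul_left, hinv]

def invariantLieₗ : g →ₗ[ℝ] g →ₗ[ℝ] g :=
  LinearMap.mk₂ ℝ (⁅·, ·⁆) (add_lie_of_invariant hinv) (smul_lie_of_invariant hinv)
    (lie_add_of_invariant hinv) (lie_smul_of_invariant hinv)

theorem invariantLieₗ_apply (X Y : g) : invariantLieₗ hinv X Y = ⁅X, Y⁆ :=
  rfl

theorem lie_self_of_invariant (X : g) : ⁅X, X⁆ = 0 := by
  -- `lie_self` gives the `LieRing` zero, which bilinearity identifies with the normed one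
  calc ⁅X, X⁆ = ⁅(0 : g), (0 : g)⁆ := by rw [lie_self, lie_self]
    _ = 0 := by rw [← invariantLieₗ_apply hinv, map_zero]

theorem lie_skew_of_invariant (X Y : g) : ⁅Y, X⁆ = -⁅X, Y⁆ := by
  have h := lie_self_of_invariant hinv (X + Y)
  rw [add_lie_of_invariant hinv, lie_add_of_invariant hinv, lie_add_of_invariant hinv,
    lie_self_of_invariant hinv, lie_self_of_invariant hinv, zero_add, add_zero] at h
  exact eq_neg_of_add_eq_zero_right h

end InvariantBracket

section AbelianSubspace

variable {g : Type*} [LieRing g] [NormedAddCommGroup g] [InnerProductSpace ℝ g]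
  {a : Submodule ℝ g} (hinv : ∀ X Y Z : g, ⟪⁅X, Y⁆, Z⟫ = ⟪X, ⁅Y, Z⁆⟫)
  (habelian : ∀ x y : g, x ∈ a → y ∈ a → ⁅x, y⁆ = 0)
include hinv habelian

theorem lie_mem_orthogonal_of_mem_left {A : g} (hA : A ∈ a) (N : g) :
    ⁅A, N⁆ ∈ aᗮ := fun u hu => by
  rw [← hinv, habelian u A hu hA, inner_zero_left]

theorem lie_mem_orthogonal_of_mem_right {A : g} (hA : A ∈ a) (N : g) :
    ⁅N, A⁆ ∈ aᗮ := fun u hu => by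
  rw [real_inner_comm, hinv, habelian A u hA hu, inner_zero_right]

theorem starProjection_lie_dilate [a.HasOrthogonalProjection] (t : ℝ) (X Y : g) :
    a.starProjection ⁅X - a.starProjection X + t • a.starProjection X,
        Y - a.starProjection Y + t • a.starProjection Y⁆ =
      a.starProjection ⁅X - a.starProjection X, Y - a.starProjection Y⁆ := by
  have hPX := a.starProjection_apply_mem X
  have hPY := a.starProjection_apply_mem Y
  set P := a.starProjection
  have hmixed : P ⁅X - P X, P Y⁆ = 0 ∧ P ⁅P X, Y - P Y⁆ = 0 := by
    simp only [P, Submodule.starProjection_apply_eq_zero_iff]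
    exact ⟨lie_mem_orthogonal_of_mem_right hinv habelian hPY _,
      lie_mem_orthogonal_of_mem_left hinv habelian hPX _⟩
  simp only [← invariantLieₗ_apply hinv, map_add, map_smul, LinearMap.add_apply,
    LinearMap.smul_apply]
  simp only [invariantLieₗ_apply, habelian _ _ hPX hPY, hmixed, map_zero, smul_zero, add_zero]

end AbelianSubspace

section PullbackForms

variable {V E : Type*} [AddCommGroup E] [Module ℝ E]

theorem hasCurvatureSymmetries_bilinForm_comp (B : LinearMap.BilinForm ℝ E)
    (hB : ∀ u v, B u v = B v u) (F : V → V → E) (hF : ∀ X Y, F Y X = -F X Y) :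
    HasCurvatureSymmetries fun X Y Z W => B (F X Y) (F Z W) :=
  ⟨fun X Y Z W => by simp only [hF X Y, map_neg, LinearMap.neg_apply, neg_neg],
    fun X Y Z W => hB _ _⟩

theorem posSemidefWedge_bilinForm_comp (B : LinearMap.BilinForm ℝ E)
    (hB : ∀ u, 0 ≤ B u u) (F : V → V → E) :
    PosSemidefWedge fun X Y Z W => B (F X Y) (F Z W) := fun m X Y => by
  have h := hB (∑ i, F (X i) (Y i))
  simp only [map_sum, LinearMap.sum_apply] at h
  rwa [Finset.sum_comm] at h

end PullbackForms

section DilationForm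

variable {E : Type*} [NormedAddCommGroup E] [InnerProductSpace ℝ E]
  (K : Submodule ℝ E) [K.HasOrthogonalProjection]

noncomputable def dilationForm (t : ℝ) : LinearMap.BilinForm ℝ E :=
  (1 / 4 : ℝ) • innerₗ E + (3 * (1 - t) / 4) •
    (innerₗ E).compl₁₂ K.starProjection.toLinearMap K.starProjection.toLinearMap

theorem dilationForm_apply (t : ℝ) (u v : E) :
    dilationForm K t u v =
      1 / 4 * ⟪u, v⟫ + 3 * (1 - t) / 4 * ⟪K.starProjection u, K.starProjection v⟫ :=
  rfl

theorem dilationForm_comm (t : ℝ) (u v : E) : dilationForm K t u v = dilationForm K t v u := by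
  rw [dilationForm_apply, dilationForm_apply, real_inner_comm u,
    real_inner_comm (K.starProjection u)]

theorem dilationForm_self_nonneg {t : ℝ} (ht : t ≤ 4 / 3) (u : E) :
    0 ≤ dilationForm K t u u := by
  have hP := K.norm_starProjection_apply_le u
  rw [dilationForm_apply, real_inner_self_eq_norm_sq, real_inner_self_eq_norm_sq]
  nlinarith [mul_le_mul hP hP (norm_nonneg _) (norm_nonneg u)]

end DilationForm

theorem compA_eq_starProjection {g : Type*} [NormedAddCommGroup g] [InnerProductSpace ℝ g]
    [FiniteDimensional ℝ g] (a : Submodule ℝ g) (X : g) : compA a X = a.starProjection X :=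
  rfl

theorem scale_up_strongly_nonnegative_general
    {g : Type*} [LieRing g] [NormedAddCommGroup g] [InnerProductSpace ℝ g]
    [FiniteDimensional ℝ g]
    (hinv : ∀ X Y Z : g, ⟪⁅X, Y⁆, Z⟫ = ⟪X, ⁅Y, Z⁆⟫)
    (a : Submodule ℝ g)
    (habelian : ∀ x y : g, x ∈ a → y ∈ a → ⁅x, y⁆ = 0)
    (t : ℝ) (ht : t ≤ 4/3) :
    HasCurvatureSymmetries (fun X Y Z W : g =>
      (1/4) * ⟪⁅(X - compA a X) + t • compA a X, (Y - compA a Y) + t • compA a Y⁆,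
          ⁅(Z - compA a Z) + t • compA a Z, (W - compA a W) + t • compA a W⁆⟫
      + (3 * (1 - t) / 4) * ⟪compA a ⁅X - compA a X, Y - compA a Y⁆,
          compA a ⁅Z - compA a Z, W - compA a W⁆⟫) ∧
    PosSemidefWedge (fun X Y Z W : g =>
      (1/4) * ⟪⁅(X - compA a X) + t • compA a X, (Y - compA a Y) + t • compA a Y⁆,
          ⁅(Z - compA a Z) + t • compA a Z, (W - compA a W) + t • compA a W⁆⟫
      + (3 * (1 - t) / 4) * ⟪compA a ⁅X - compA a X, Y - compA a Y⁆,
          compA a ⁅Z - compA a Z, W - compA a W⁆⟫) := by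
  set F : g → g → g := fun X Y =>
    ⁅(X - compA a X) + t • compA a X, (Y - compA a Y) + t • compA a Y⁆
  have hT : (fun X Y Z W : g =>
      (1/4) * ⟪F X Y, F Z W⟫
        + (3 * (1 - t) / 4) * ⟪compA a ⁅X - compA a X, Y - compA a Y⁆,
          compA a ⁅Z - compA a Z, W - compA a W⁆⟫) =
      fun X Y Z W => dilationForm a t (F X Y) (F Z W) := by
    funext X Y Z W
    simp only [F, dilationForm_apply, compA_eq_starProjection,
      starProjection_lie_dilate hinv habelian]
  rw [hT]
  exact ⟨hasCurvatureSymmetries_bilinForm_comp _ (dilationForm_comm a t) F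
      fun X Y => lie_skew_of_invariant hinv _ _,
    posSemidefWedge_bilinForm_comp _ (dilationForm_self_nonneg a ht) F⟩

/-- Scale up, Lemma on `4/3` dilations: for an abelian subalgebra `a`
of a Lie algebra `g` with invariant inner product `Q`, and `0 < t ≤ 4/3`, the
quadrilinear form
`T_t(X,Y,Z,W) = (1/4)Q([X_n + tX_a, Y_n + tY_a],[Z_n + tZ_a, W_n + tW_a])
  + (3(1−t)/4)Q([X_n,Y_n]_a,[Z_n,W_n]_a)`
has curvature symmetries and is positive semidefinite on `∧²g`.  (Here
`T_t = R_t + ω_t` with `R_t` the curvature operator of `Q_t = t·Q|_a ⊕ Q|_n` and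
`ω_t = 3b(α)` a 4-form, so `(G,Q_t)` has strongly nonnegative curvature.) -/
theorem scale_up_strongly_nonnegative
    {g : Type*} [LieRing g] [NormedAddCommGroup g] [InnerProductSpace ℝ g]
    [FiniteDimensional ℝ g]
    (hsmul : ∀ (c : ℝ) (X Y : g), ⁅c • X, Y⁆ = c • ⁅X, Y⁆)
    (hinv : ∀ X Y Z : g, ⟪⁅X, Y⁆, Z⟫ = ⟪X, ⁅Y, Z⁆⟫)
    (a : Submodule ℝ g) (hsub : ∀ x y : g, x ∈ a → y ∈ a → ⁅x, y⁆ ∈ a)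
    (habelian : ∀ x y : g, x ∈ a → y ∈ a → ⁅x, y⁆ = 0)
    (t : ℝ) (ht0 : 0 < t) (ht : t ≤ 4/3) :
    HasCurvatureSymmetries (fun X Y Z W : g =>
      (1/4) * ⟪⁅(X - compA a X) + t • compA a X, (Y - compA a Y) + t • compA a Y⁆,
          ⁅(Z - compA a Z) + t • compA a Z, (W - compA a W) + t • compA a W⁆⟫
      + (3 * (1 - t) / 4) * ⟪compA a ⁅X - compA a X, Y - compA a Y⁆,
          compA a ⁅Z - compA a Z, W - compA a W⁆⟫) ∧
    PosSemidefWedge (fun X Y Z W : g =>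
      (1/4) * ⟪⁅(X - compA a X) + t • compA a X, (Y - compA a Y) + t • compA a Y⁆,
          ⁅(Z - compA a Z) + t • compA a Z, (W - compA a W) + t • compA a W⁆⟫
      + (3 * (1 - t) / 4) * ⟪compA a ⁅X - compA a X, Y - compA a Y⁆,
          compA a ⁅Z - compA a Z, W - compA a W⁆⟫) :=
  scale_up_strongly_nonnegative_general hinv a habelian t ht
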